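/- arXiv:2410.17857 — 2 statements merged into one kernel-verified Lean document; each statement's English description precedes it below -/
import Mathlib

section
/- Let c₁ < c₂ be real numbers, let g be a real polynomial that is not identically zero, let k < p be natural numbers, let α : ℕ → ℝ satisfy α_{k+1} ≠ 0, and let f(ξ) = Σ_{m=k+1}^{p} α_m ξ^m. Then, as δ → 0⁺, the squared L² norm ∫_{c₁}^{c₂}∫_0^δ (g(ξ₁))²(f(ξ₂))² dξ₂ dξ₁ of the tensor-product function φ(ξ₁,ξ₂) = g(ξ₁)f(ξ₂) on [c₁,c₂] × [0,δ] is Θ(δ^{2k+3}). -/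
/-!
The integrand factors, so the squared norm is `(∫ g²) · ∫₀^δ f²` with a positive first factor.
Writing `f(ξ) = ξ^(k+1) h(ξ)` with `h(0) = α_{k+1}`, the substitution `ξ = δt` gives
`∫₀^δ ξ^(2k+2) h(ξ)² dξ = δ^(2k+3) ∫₀¹ t^(2k+2) h(δt)² dt`, and the last integral tends to
`α_{k+1}² / (2k+3) ≠ 0` by continuity of parametric integrals.
-/

open Topology Asymptotics Polynomial Filter

theorem intervalIntegral.integral_pow_mul_eq_pow_mul_integral_comp_mul (n : ℕ) (H : ℝ → ℝ)
    (δ : ℝ) : ∫ ξ in 0..δ, ξ ^ n * H ξ = δ ^ (n + 1) * ∫ t in 0..1, t ^ n * H (δ * t) := by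
  rcases eq_or_ne δ 0 with rfl | hδ
  · simp
  have := intervalIntegral.integral_comp_mul_left (fun ξ => ξ ^ n * H ξ) (a := 0) (b := 1) hδ
  simp only [mul_pow, mul_assoc, intervalIntegral.integral_const_mul, mul_zero, mul_one,
    smul_eq_mul] at this
  rw [pow_succ', mul_assoc, this]
  field_simp

theorem tendsto_integral_pow_mul_comp_mul {H : ℝ → ℝ} (hH : Continuous H) (n : ℕ) :
    Tendsto (fun δ => ∫ t in 0..1, t ^ n * H (δ * t)) (𝓝 0) (𝓝 (H 0 / (n + 1))) := by
  have hcont : Continuous fun δ => ∫ t in (0 : ℝ)..1, t ^ n * H (δ * t) :=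
    intervalIntegral.continuous_parametric_intervalIntegral_of_continuous' (by fun_prop) 0 1
  convert hcont.tendsto 0 using 2
  simp [intervalIntegral.integral_mul_const, integral_pow]
  ring

theorem isTheta_integral_pow_mul {H : ℝ → ℝ} (hH : Continuous H) (hH0 : H 0 ≠ 0) (n : ℕ) :
    (fun δ => ∫ ξ in 0..δ, ξ ^ n * H ξ) =Θ[𝓝 0] fun δ => δ ^ (n + 1) := by
  have hL : H 0 / (n + 1) ≠ 0 := div_ne_zero hH0 (by positivity)
  have hequiv : (fun δ => ∫ ξ in 0..δ, ξ ^ n * H ξ) ~[𝓝 0]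
      fun δ => δ ^ (n + 1) * (H 0 / (n + 1)) := by
    rw [funext (intervalIntegral.integral_pow_mul_eq_pow_mul_integral_comp_mul n H)]
    exact IsEquivalent.refl.mul
      ((isEquivalent_const_iff_tendsto hL).2 (tendsto_integral_pow_mul_comp_mul hH n))
  refine hequiv.isTheta.trans ?_
  simpa only [mul_comm] using (isTheta_const_mul_left hL).2 (isTheta_refl _ _)

theorem integral_sq_eval_pos {a b : ℝ} (hab : a < b) {g : ℝ[X]} (hg : g ≠ 0) :
    0 < ∫ x in a..b, g.eval x ^ 2 := by
  refine intervalIntegral.integral_pos hab (g.continuous.pow 2).continuousOn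
    (fun x _ => sq_nonneg _) ?_
  obtain ⟨x, hx, hroot⟩ :=
    ((Set.Icc_infinite hab).sdiff (g.finite_setOfPred_isRoot hg)).nonempty
  exact ⟨x, hx, sq_pos_of_ne_zero hroot⟩

theorem Finset.sum_Icc_mul_pow_eq_pow_mul_sum {R : Type*} [CommSemiring R] (k p : ℕ) (α : ℕ → R)
    (x : R) : ∑ m ∈ Icc (k + 1) p, α m * x ^ m =
      x ^ (k + 1) * ∑ m ∈ Icc (k + 1) p, α m * x ^ (m - (k + 1)) := by
  rw [mul_sum]
  refine sum_congr rfl fun m hm => ?_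
  rw [mul_left_comm, ← pow_add, Nat.add_sub_cancel' (mem_Icc.1 hm).1]

theorem Finset.sum_Icc_mul_zero_pow_sub {R : Type*} [CommSemiring R] {k p : ℕ} (hkp : k < p)
    (α : ℕ → R) : ∑ m ∈ Icc (k + 1) p, α m * 0 ^ (m - (k + 1)) = α (k + 1) := by
  rw [sum_eq_single_of_mem (k + 1) (mem_Icc.2 ⟨le_rfl, hkp⟩) fun m hm hne => ?_]
  · simp
  · rw [zero_pow (by grind), mul_zero]

/-- Configuration (a): for `φ(ξ₁,ξ₂) = g(ξ₁) f(ξ₂)` with `g` a nonzero polynomial and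
`f(ξ) = ∑_{m=k+1}^{p} α_m ξ^m`, `α_{k+1} ≠ 0`, the squared `L²` norm of `φ` on
`[c₁,c₂] × [0,δ]` is `Θ(δ^{2k+3})` as `δ → 0⁺`. -/
theorem l2_norm_asymptotics_config_a (c₁ c₂ : ℝ) (hc : c₁ < c₂)
    (g : Polynomial ℝ) (hg : g ≠ 0)
    (k p : ℕ) (hkp : k < p) (α : ℕ → ℝ) (hα : α (k + 1) ≠ 0) :
    (fun δ : ℝ => ∫ ξ₁ in c₁..c₂, ∫ ξ₂ in (0:ℝ)..δ,
        (g.eval ξ₁) ^ 2 * (∑ m ∈ Finset.Icc (k + 1) p, α m * ξ₂ ^ m) ^ 2)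
      =Θ[𝓝[>] (0:ℝ)] (fun δ : ℝ => δ ^ (2 * k + 3)) := by
  set h : ℝ → ℝ := fun ξ => ∑ m ∈ Finset.Icc (k + 1) p, α m * ξ ^ (m - (k + 1))
  have hsq (ξ : ℝ) :
      (∑ m ∈ Finset.Icc (k + 1) p, α m * ξ ^ m) ^ 2 = ξ ^ (2 * k + 2) * h ξ ^ 2 := by
    rw [Finset.sum_Icc_mul_pow_eq_pow_mul_sum, mul_pow, ← pow_mul]
    ring
  have hf : (fun δ : ℝ => ∫ ξ in (0:ℝ)..δ, ξ ^ (2 * k + 2) * h ξ ^ 2)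
      =Θ[𝓝 0] fun δ => δ ^ (2 * k + 3) :=
    isTheta_integral_pow_mul (by fun_prop)
      (by simp [h, Finset.sum_Icc_mul_zero_pow_sub hkp, hα]) _
  simp only [hsq, intervalIntegral.integral_const_mul, intervalIntegral.integral_mul_const]
  exact (isTheta_const_mul_left (integral_sq_eval_pos hc hg).ne').2 (hf.mono nhdsWithin_le_nhds)
end

section
/- Let k₁ < p₁ and k₂ < p₂ be natural numbers, let α⁽¹⁾, α⁽²⁾ : ℕ → ℝ satisfy α⁽¹⁾_{k₁+1} ≠ 0 and α⁽²⁾_{k₂+1} ≠ 0, and let f₁(ξ) = Σ_{m=k₁+1}^{p₁} α⁽¹⁾_m ξ^m and f₂(ξ) = Σ_{m=k₂+1}^{p₂} α⁽²⁾_m ξ^m. Then, as δ → 0⁺, the Rayleigh-type ratio [∫_0^δ∫_0^δ ((f₁′(ξ₁))²(f₂(ξ₂))² + (f₁(ξ₁))²(f₂′(ξ₂))²) dξ₂ dξ₁] / [∫_0^δ∫_0^δ f₁(ξ₁)f₂(ξ₂) dξ₂ dξ₁] is Θ(δ^{k₁+k₂}); in particular this ratio remains bounded as δ → 0⁺ and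 tends to 0 whenever k₁ + k₂ ≥ 1. -/
/-! Near `0` each factor `f = ∑_{m>k} α_m ξ^m` behaves like its lowest-order term: `f ≈ α_{k+1} ξ^{k+1}`
and `f' ≈ (k+1) α_{k+1} ξ^k`. Both double integrals split into products of one-dimensional integrals,
and integrating from `0` raises the order of the leading term by one (L'Hôpital's rule). So the
numerator has exact order `δ^{2k₁+2k₂+4}` (its leading coefficient is a sum of positive terms) and the
denominator exact order `δ^{k₁+k₂+4}`. -/

open Topology Asymptotics Filter intervalIntegral

def HasLeadingTerm (f : ℝ → ℝ) (c : ℝ) (n : ℕ) : Prop :=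
  Tendsto (fun x => f x / x ^ n) (𝓝[>] 0) (𝓝 c)

namespace HasLeadingTerm

variable {f g : ℝ → ℝ} {a b : ℝ} {m n : ℕ}

theorem isTheta (hf : HasLeadingTerm f a n) (ha : a ≠ 0) :
    f =Θ[𝓝[>] 0] fun x => x ^ n :=
  (isTheta_of_div_tendsto_nhds_ne_zero hf ha).symm

theorem of_eq (hf : HasLeadingTerm f a m) (h : m = n) : HasLeadingTerm f a n := h ▸ hf

theorem add (hf : HasLeadingTerm f a n) (hg : HasLeadingTerm g b n) :
    HasLeadingTerm (fun x => f x + g x) (a + b) n := by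
  simpa only [HasLeadingTerm, add_div] using Tendsto.add hf hg

theorem mul (hf : HasLeadingTerm f a m) (hg : HasLeadingTerm g b n) :
    HasLeadingTerm (fun x => f x * g x) (a * b) (m + n) := by
  simpa only [HasLeadingTerm, pow_add, mul_div_mul_comm] using Tendsto.mul hf hg

theorem sq (hf : HasLeadingTerm f a n) :
    HasLeadingTerm (fun x => f x ^ 2) (a ^ 2) (2 * n) := by
  simpa only [HasLeadingTerm, pow_mul', div_pow] using Tendsto.pow hf 2

theorem div (hf : HasLeadingTerm f a (m + n)) (hg : HasLeadingTerm g b n) (hb : b ≠ 0) :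
    HasLeadingTerm (fun x => f x / g x) (a / b) m := by
  refine (tendsto_congr' ?_).mp (Tendsto.div hf hg hb)
  filter_upwards [self_mem_nhdsWithin] with x (hx : 0 < x)
  simp only [Pi.div_apply]
  field_simp
  ring

theorem integral (hf : HasLeadingTerm f a n) (hcont : Continuous f) :
    HasLeadingTerm (fun δ => ∫ x in (0 : ℝ)..δ, f x) (a / (n + 1)) (n + 1) := by
  have hpow : ∀ x : ℝ, HasDerivAt (fun x => x ^ (n + 1)) ((n + 1 : ℕ) * x ^ n) x := by
    intro x; simpa using hasDerivAt_pow (n + 1) x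
  refine HasDerivAt.lhopital_zero_nhdsGT
    (Eventually.of_forall fun x => hcont.integral_hasStrictDerivAt 0 x |>.hasDerivAt)
    (Eventually.of_forall hpow) ?_ ?_ ?_ ?_
  · filter_upwards [self_mem_nhdsWithin] with x (hx : 0 < x)
    positivity
  · have h := (hcont.integral_hasStrictDerivAt 0 0).hasDerivAt.continuousAt.tendsto
    rw [integral_same] at h
    exact h.mono_left nhdsWithin_le_nhds
  · have h := ((continuous_pow (n + 1)).tendsto (0 : ℝ)).mono_left
      (nhdsWithin_le_nhds (s := Set.Ioi 0))
    rwa [zero_pow n.succ_ne_zero] at h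
  · convert Tendsto.div_const hf (n + 1 : ℝ) using 2 with x
    push_cast
    rw [div_div, mul_comm]

end HasLeadingTerm

open Finset in
theorem hasLeadingTerm_sum_mul_pow {ι : Type*} (s : Finset ι) (c : ι → ℝ) (e : ι → ℕ) {i₀ : ι}
    (hi₀ : i₀ ∈ s) (he : ∀ i ∈ s, i ≠ i₀ → e i₀ < e i) :
    HasLeadingTerm (fun x => ∑ i ∈ s, c i * x ^ e i) (c i₀) (e i₀) := by
  have hshift : ∀ᶠ x in 𝓝[>] (0 : ℝ),
      ∑ i ∈ s, c i * x ^ (e i - e i₀) = (∑ i ∈ s, c i * x ^ e i) / x ^ e i₀ := by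
    filter_upwards [self_mem_nhdsWithin] with x (hx : 0 < x)
    rw [sum_div]
    refine sum_congr rfl fun i hi => ?_
    have : e i₀ ≤ e i := by
      rcases eq_or_ne i i₀ with rfl | hne
      · rfl
      · exact (he i hi hne).le
    rw [pow_sub₀ x hx.ne' this, mul_div_assoc, div_eq_mul_inv]
  refine (tendsto_congr' hshift).mp ?_
  have hcont : Continuous fun x : ℝ => ∑ i ∈ s, c i * x ^ (e i - e i₀) := by fun_prop
  convert (hcont.tendsto 0).mono_left nhdsWithin_le_nhds
  rw [sum_eq_single_of_mem i₀ hi₀ fun i hi hne => ?_]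
  · simp
  · rw [zero_pow (Nat.sub_ne_zero_of_lt (he i hi hne)), mul_zero]

theorem deriv_sum_mul_pow {ι : Type*} (s : Finset ι) (c : ι → ℝ) (e : ι → ℕ) :
    deriv (fun x : ℝ => ∑ i ∈ s, c i * x ^ e i) =
      fun x => ∑ i ∈ s, (c i * e i) * x ^ (e i - 1) := by
  funext x
  refine (HasDerivAt.fun_sum fun i _ => ?_).deriv
  simpa [mul_assoc] using (hasDerivAt_pow (e i) x).const_mul (c i)

theorem integral_integral_mul (u v : ℝ → ℝ) (a b c d : ℝ) :
    ∫ x in a..b, ∫ y in c..d, u x * v y = (∫ x in a..b, u x) * ∫ y in c..d, v y := by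
  simp only [integral_const_mul, integral_mul_const]

theorem integral_integral_add_mul {u₁ v₁ u₂ v₂ : ℝ → ℝ} {a b c d : ℝ}
    (hu₁ : IntervalIntegrable u₁ MeasureTheory.volume a b)
    (hu₂ : IntervalIntegrable u₂ MeasureTheory.volume a b)
    (hv₁ : IntervalIntegrable v₁ MeasureTheory.volume c d)
    (hv₂ : IntervalIntegrable v₂ MeasureTheory.volume c d) :
    ∫ x in a..b, ∫ y in c..d, (u₁ x * v₁ y + u₂ x * v₂ y) =
      (∫ x in a..b, u₁ x) * (∫ y in c..d, v₁ y) + (∫ x in a..b, u₂ x) * ∫ y in c..d, v₂ y := by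
  simp only [integral_add (hv₁.const_mul _) (hv₂.const_mul _), integral_const_mul]
  rw [integral_add (hu₁.mul_const _) (hu₂.mul_const _), integral_mul_const, integral_mul_const]

theorem hasLeadingTerm_sum_Icc_mul_pow {k p : ℕ} (hkp : k < p) (α : ℕ → ℝ) :
    HasLeadingTerm (fun x => ∑ m ∈ Finset.Icc (k + 1) p, α m * x ^ m) (α (k + 1)) (k + 1) :=
  hasLeadingTerm_sum_mul_pow _ α id (Finset.mem_Icc.mpr ⟨le_rfl, hkp⟩)
    fun _ hm hne => lt_of_le_of_ne (Finset.mem_Icc.mp hm).1 hne.symm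

theorem hasLeadingTerm_deriv_sum_Icc_mul_pow {k p : ℕ} (hkp : k < p) (α : ℕ → ℝ) :
    HasLeadingTerm (deriv fun x => ∑ m ∈ Finset.Icc (k + 1) p, α m * x ^ m)
      (α (k + 1) * (k + 1 : ℕ)) k := by
  rw [deriv_sum_mul_pow]
  exact hasLeadingTerm_sum_mul_pow _ (fun m => α m * m) (· - 1)
    (Finset.mem_Icc.mpr ⟨le_rfl, hkp⟩)
    fun _ hm hne => by have := (Finset.mem_Icc.mp hm).1; omega

theorem isTheta_rayleigh_ratio {f₁ f₂ : ℝ → ℝ} {a₁ a₂ b₁ b₂ : ℝ} {k₁ k₂ : ℕ}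
    (hf₁ : ContDiff ℝ 1 f₁) (hf₂ : ContDiff ℝ 1 f₂)
    (h₁ : HasLeadingTerm f₁ a₁ (k₁ + 1)) (h₂ : HasLeadingTerm f₂ a₂ (k₂ + 1))
    (h₁' : HasLeadingTerm (deriv f₁) b₁ k₁) (h₂' : HasLeadingTerm (deriv f₂) b₂ k₂)
    (ha₁ : a₁ ≠ 0) (ha₂ : a₂ ≠ 0) (hb₁ : b₁ ≠ 0) (hb₂ : b₂ ≠ 0) :
    (fun δ : ℝ =>
        (∫ ξ₁ in (0:ℝ)..δ, ∫ ξ₂ in (0:ℝ)..δ,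
          deriv f₁ ξ₁ ^ 2 * f₂ ξ₂ ^ 2 + f₁ ξ₁ ^ 2 * deriv f₂ ξ₂ ^ 2) /
        (∫ ξ₁ in (0:ℝ)..δ, ∫ ξ₂ in (0:ℝ)..δ, f₁ ξ₁ * f₂ ξ₂))
      =Θ[𝓝[>] (0:ℝ)] (fun δ : ℝ => δ ^ (k₁ + k₂)) := by
  have hc₁ := hf₁.continuous
  have hc₂ := hf₂.continuous
  have hd₁ := hf₁.continuous_deriv le_rfl
  have hd₂ := hf₂.continuous_deriv le_rfl
  have hsplit : ∀ δ : ℝ, ∫ ξ₁ in (0:ℝ)..δ, ∫ ξ₂ in (0:ℝ)..δ,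
      deriv f₁ ξ₁ ^ 2 * f₂ ξ₂ ^ 2 + f₁ ξ₁ ^ 2 * deriv f₂ ξ₂ ^ 2 =
        (∫ x in (0:ℝ)..δ, deriv f₁ x ^ 2) * (∫ x in (0:ℝ)..δ, f₂ x ^ 2) +
          (∫ x in (0:ℝ)..δ, f₁ x ^ 2) * ∫ x in (0:ℝ)..δ, deriv f₂ x ^ 2 := fun δ =>
    integral_integral_add_mul ((hd₁.pow 2).intervalIntegrable _ _)
      ((hc₁.pow 2).intervalIntegrable _ _) ((hc₂.pow 2).intervalIntegrable _ _)
      ((hd₂.pow 2).intervalIntegrable _ _)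
  simp only [hsplit, integral_integral_mul]
  have hnum := ((h₁'.sq.integral (hd₁.pow 2)).mul (h₂.sq.integral (hc₂.pow 2))).add
    (((h₁.sq.integral (hc₁.pow 2)).mul (h₂'.sq.integral (hd₂.pow 2))).of_eq (by ring))
  have hden := (h₁.integral hc₁).mul (h₂.integral hc₂)
  refine ((hnum.of_eq (by ring)).div hden ?_).isTheta ?_
  · positivity
  · positivity

/-- Configuration (c): for `φ(ξ₁,ξ₂) = f₁(ξ₁) f₂(ξ₂)` with
`f_j(ξ) = ∑_{m=k_j+1}^{p_j} α⁽ʲ⁾_m ξ^m`, `α⁽ʲ⁾_{k_j+1} ≠ 0`, the Rayleigh-type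
ratio (squared H¹ seminorm over L¹ norm of `φ` on `[0,δ] × [0,δ]`) is
`Θ(δ^{k₁+k₂})` as `δ → 0⁺`; in particular it remains bounded and tends to `0`
whenever `k₁ + k₂ ≥ 1`. -/
theorem rayleigh_ratio_asymptotics_config_c (k₁ p₁ k₂ p₂ : ℕ)
    (hkp₁ : k₁ < p₁) (hkp₂ : k₂ < p₂)
    (α₁ α₂ : ℕ → ℝ) (hα₁ : α₁ (k₁ + 1) ≠ 0) (hα₂ : α₂ (k₂ + 1) ≠ 0) :
    (fun δ : ℝ =>
        (∫ ξ₁ in (0:ℝ)..δ, ∫ ξ₂ in (0:ℝ)..δ,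
          (deriv (fun t : ℝ => ∑ m ∈ Finset.Icc (k₁ + 1) p₁, α₁ m * t ^ m) ξ₁) ^ 2 *
            (∑ m ∈ Finset.Icc (k₂ + 1) p₂, α₂ m * ξ₂ ^ m) ^ 2 +
          (∑ m ∈ Finset.Icc (k₁ + 1) p₁, α₁ m * ξ₁ ^ m) ^ 2 *
            (deriv (fun t : ℝ => ∑ m ∈ Finset.Icc (k₂ + 1) p₂, α₂ m * t ^ m) ξ₂) ^ 2) /
        (∫ ξ₁ in (0:ℝ)..δ, ∫ ξ₂ in (0:ℝ)..δ,
          (∑ m ∈ Finset.Icc (k₁ + 1) p₁, α₁ m * ξ₁ ^ m) *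
          (∑ m ∈ Finset.Icc (k₂ + 1) p₂, α₂ m * ξ₂ ^ m)))
      =Θ[𝓝[>] (0:ℝ)] (fun δ : ℝ => δ ^ (k₁ + k₂)) :=
  isTheta_rayleigh_ratio (by fun_prop) (by fun_prop)
    (hasLeadingTerm_sum_Icc_mul_pow hkp₁ α₁) (hasLeadingTerm_sum_Icc_mul_pow hkp₂ α₂)
    (hasLeadingTerm_deriv_sum_Icc_mul_pow hkp₁ α₁) (hasLeadingTerm_deriv_sum_Icc_mul_pow hkp₂ α₂)
    hα₁ hα₂ (mul_ne_zero hα₁ (by positivity)) (mul_ne_zero hα₂ (by positivity))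
end
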